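/- arXiv:1908.04056 — 4 statements merged into one kernel-verified Lean document; each statement's English description precedes it below -/
import Mathlib

section
/- For every Nyldon word x over A and every proper nonempty suffix s of x such that s is Nyldon, one has s <_lex x. -/
/-!
Common definitions: words over a totally ordered alphabet, lexicographic order,
Nyldon and Lyndon words, Nyldon-like sets, right Hall sets, and (circular) codes.
-/

/-- Strict lexicographic order on words: `u <_lex v` iff `u` is a proper prefix of `v`,
or `u` and `v` first differ at a position where `u` has the smaller letter. -/
def LexLt {A : Type*} [LinearOrder A] (u v : List A) : Prop :=
  List.Lex (· < ·) u v

/-- Nonstrict lexicographic order on words. -/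
def LexLe {A : Type*} [LinearOrder A] (u v : List A) : Prop :=
  u = v ∨ LexLt u v

theorem length_le_length_flatten_of_ne_nil {A : Type*} {s : List (List A)}
    (h : ∀ g ∈ s, g ≠ []) : s.length ≤ s.flatten.length := by
  induction s with
  | nil => simp
  | cons a t ih =>
    simp only [List.flatten_cons, List.length_append, List.length_cons]
    have ha : 1 ≤ a.length := List.length_pos_iff.mpr (h a (by simp))
    have ht := ih (fun g hg => h g (List.mem_cons_of_mem _ hg))
    omega

theorem length_lt_length_flatten {A : Type*} {f : List A} {fs : List (List A)}
    (h2 : 2 ≤ fs.length) (hne : ∀ g ∈ fs, g ≠ []) (hf : f ∈ fs) :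
    f.length < fs.flatten.length := by
  obtain ⟨s, t, rfl⟩ := List.append_of_mem hf
  have hs : s.length ≤ s.flatten.length :=
    length_le_length_flatten_of_ne_nil (fun g hg => hne g (by simp [hg]))
  have ht : t.length ≤ t.flatten.length :=
    length_le_length_flatten_of_ne_nil (fun g hg => hne g (by simp [hg]))
  have hlen : 2 ≤ s.length + t.length + 1 := by
    simp only [List.length_append, List.length_cons] at h2
    omega
  have hj : (s ++ f :: t).flatten.length
      = s.flatten.length + f.length + t.flatten.length := by
    simp [List.flatten_append]
    omega
  omega

/-- A nonempty word is Nyldon if it admits no factorization into at least two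
lexicographically nondecreasing Nyldon words. (Single letters are Nyldon vacuously,
since they admit no factorization into at least two nonempty words at all.) -/
def IsNyldon {A : Type*} [LinearOrder A] (w : List A) : Prop :=
  w ≠ [] ∧ ∀ fs : List (List A), 2 ≤ fs.length → (∀ g ∈ fs, g ≠ []) →
    fs.flatten = w → (∀ f ∈ fs, IsNyldon f) → fs.Chain' LexLe → False
termination_by w.length
decreasing_by
  rename_i h2 hne hjoin hf
  subst hjoin
  exact length_lt_length_flatten h2 hne hf

/-- A nonempty word is Lyndon if it admits no factorization into at least two
lexicographically nonincreasing Lyndon words. -/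
def IsLyndon {A : Type*} [LinearOrder A] (w : List A) : Prop :=
  w ≠ [] ∧ ∀ fs : List (List A), 2 ≤ fs.length → (∀ g ∈ fs, g ≠ []) →
    fs.flatten = w → (∀ f ∈ fs, IsLyndon f) →
    fs.Chain' (fun u v => LexLe v u) → False
termination_by w.length
decreasing_by
  rename_i h2 hne hjoin hf
  subst hjoin
  exact length_lt_length_flatten h2 hne hf

/-- `fs` is a Nyldon factorization of `w`: a nondecreasing (under `≤_lex`) sequence
of Nyldon words whose concatenation is `w`. -/
def IsNyldonFactorization {A : Type*} [LinearOrder A] (fs : List (List A)) (w : List A) :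
    Prop :=
  (∀ f ∈ fs, IsNyldon f) ∧ fs.Chain' LexLe ∧ fs.flatten = w

/-- The `j`-th power `u^j` of a word `u`: the concatenation of `j` copies of `u`. -/
def wordPow {A : Type*} (u : List A) (j : ℕ) : List A :=
  (List.replicate j u).flatten

/-- A word is primitive if it is not a power `u^j` of a word `u` with `j ≥ 2`. -/
def Primitive {A : Type*} (w : List A) : Prop :=
  ∀ (u : List A) (j : ℕ), 2 ≤ j → w ≠ wordPow u j

/-- A Nyldon-like set over the alphabet `A`: a set `Mem` of nonempty words together with a
strict total order `lt` on it, such that every single letter is in the set, a word of length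
at least `2` is in the set iff it admits no factorization into at least two nondecreasing
words of the set, and `f ≺ fg` whenever `f`, `g`, `fg` are all in the set. -/
structure NyldonLike (A : Type*) where
  /-- membership in `G` -/
  Mem : List A → Prop
  /-- the strict total order `≺` on `G` -/
  lt : List A → List A → Prop
  mem_ne_nil : ∀ w, Mem w → w ≠ []
  lt_irrefl : ∀ u, Mem u → ¬ lt u u
  lt_trans : ∀ u v x, Mem u → Mem v → Mem x → lt u v → lt v x → lt u x
  lt_total : ∀ u v, Mem u → Mem v → lt u v ∨ u = v ∨ lt v u
  singleton_mem : ∀ a : A, Mem [a]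
  mem_iff : ∀ w : List A, 2 ≤ w.length →
    (Mem w ↔ ¬ ∃ fs : List (List A), 2 ≤ fs.length ∧ (∀ f ∈ fs, Mem f) ∧
      fs.Chain' (fun u v => u = v ∨ lt u v) ∧ fs.flatten = w)
  append_lt : ∀ f g, Mem f → Mem g → Mem (f ++ g) → lt f (f ++ g)

namespace NyldonLike

variable {A : Type*}

/-- The nonstrict order `⪯` associated to a Nyldon-like set. -/
def le (G : NyldonLike A) (u v : List A) : Prop :=
  u = v ∨ G.lt u v

/-- `fs` is a `G`-factorization of `w`: a nondecreasing (under `⪯`) sequence of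
`G`-words whose concatenation is `w`. -/
def IsFactorization (G : NyldonLike A) (fs : List (List A)) (w : List A) : Prop :=
  (∀ f ∈ fs, G.Mem f) ∧ fs.Chain' G.le ∧ fs.flatten = w

end NyldonLike

/-- A factorization `fs` of a word written as the concatenation of `blocks` preserves the
blocks if each factor is the concatenation of a (nonempty) consecutive run of whole blocks. -/
def PreservesBlocks {A : Type*} (blocks fs : List (List A)) : Prop :=
  ∃ P : List (List (List A)), (∀ p ∈ P, p ≠ []) ∧ P.flatten = blocks ∧
    P.map List.flatten = fs

/-- A right Hall set over the alphabet `A`: a set `Mem` of nonempty words with a strict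
total order `lt` such that every nonempty word has a unique nondecreasing factorization
into words of the set, and `fg ≻ g` whenever `f`, `g`, `fg` are all in the set. -/
structure RightHallSet (A : Type*) where
  /-- membership in `H` -/
  Mem : List A → Prop
  /-- the strict total order `≺` on `H` -/
  lt : List A → List A → Prop
  mem_ne_nil : ∀ w, Mem w → w ≠ []
  lt_irrefl : ∀ u, Mem u → ¬ lt u u
  lt_trans : ∀ u v x, Mem u → Mem v → Mem x → lt u v → lt v x → lt u x
  lt_total : ∀ u v, Mem u → Mem v → lt u v ∨ u = v ∨ lt v u
  unique_factorization : ∀ w : List A, w ≠ [] →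
    ∃! fs : List (List A), (∀ f ∈ fs, Mem f) ∧
      fs.Chain' (fun u v => u = v ∨ lt u v) ∧ fs.flatten = w
  append_gt : ∀ f g, Mem f → Mem g → Mem (f ++ g) → lt g (f ++ g)

/-- A set `F` of words is a code if any two sequences of words of `F` with equal
concatenations are equal. -/
def IsCode {A : Type*} (F : List A → Prop) : Prop :=
  ∀ l₁ l₂ : List (List A), (∀ f ∈ l₁, F f) → (∀ f ∈ l₂, F f) →
    l₁.flatten = l₂.flatten → l₁ = l₂

/-- `w ∈ F*`: `w` is a concatenation of (zero or more) words of `F`. -/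
def CodeStar {A : Type*} (F : List A → Prop) (w : List A) : Prop :=
  ∃ l : List (List A), (∀ f ∈ l, F f) ∧ l.flatten = w

/-- A set `F` of words is a circular code if it is a code and whenever
`uv ∈ F*` and `vu ∈ F*`, also `u ∈ F*` and `v ∈ F*`. -/
def IsCircularCode {A : Type*} (F : List A → Prop) : Prop :=
  IsCode F ∧ ∀ u v : List A, CodeStar F (u ++ v) → CodeStar F (v ++ u) → CodeStar F u ∧ CodeStar F v

/-!
Induct on `|w|`, and for fixed `w` on `|w| - |s|`. Write `w = p s` and let `p_k` be the last
factor of a Nyldon factorization of `p`. If `p_k ≤ s`, appending `s` would factor `w`, so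
`s < p_k ≤ p_k s`, which settles the case `p_k s = w`. Otherwise take a Nyldon factorization
of `u = p_k s` with last factor `v`. The Nyldon suffix `s` of `u` is a suffix of `v`: were it
`r` followed by the later factors, with `r` a nonempty suffix of an earlier factor `f`, the last
factor of a Nyldon factorization of `r` would be at most `f` by induction, and `s` would factor.
If `s = v`, the earlier factors would form a Nyldon factorization of the Nyldon word `p_k`,
hence be `[p_k]`, giving `p_k ≤ s`. So `s` is a proper suffix of `v`, and `s < v < w` by the
two induction hypotheses.
-/

section Nyldon

variable {A : Type*} [LinearOrder A]

-- `LexLt` is definitionally core's `<` on lists, for which `List A` is a linear order.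
theorem lexLe_iff_le {u v : List A} : LexLe u v ↔ u ≤ v :=
  le_iff_eq_or_lt.symm

theorem IsNyldon.ne_nil {w : List A} (hw : IsNyldon w) : w ≠ [] := by
  rw [IsNyldon] at hw
  exact hw.1

theorem IsNyldon.not_isNyldonFactorization {fs : List (List A)} {w : List A} (hw : IsNyldon w)
    (hfs : IsNyldonFactorization fs w) (h2 : 2 ≤ fs.length) : False := by
  rw [IsNyldon] at hw
  exact hw.2 fs h2 (fun g hg => (hfs.1 g hg).ne_nil) hfs.2.2 hfs.1 hfs.2.1

theorem IsNyldon.isNyldonFactorization_singleton {w : List A} (hw : IsNyldon w) :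
    IsNyldonFactorization [w] w :=
  ⟨by simpa using hw, List.isChain_singleton w, by simp⟩

theorem exists_isNyldonFactorization {w : List A} (hw : w ≠ []) :
    ∃ fs f, IsNyldonFactorization (fs ++ [f]) w := by
  by_cases h : IsNyldon w
  · exact ⟨[], w, h.isNyldonFactorization_singleton⟩
  rw [IsNyldon] at h
  push Not at h
  obtain ⟨fs, h2, -, hflat, hnyl, hchain, -⟩ := h hw
  obtain ⟨fs', f, rfl⟩ := (List.eq_nil_or_concat' fs).resolve_left (by rintro rfl; simp at h2)
  exact ⟨fs', f, hnyl, hchain, hflat⟩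

theorem IsNyldonFactorization.eq_singleton {fs : List (List A)} {w : List A}
    (hfs : IsNyldonFactorization fs w) (hw : IsNyldon w) : fs = [w] := by
  match fs, hfs with
  | [], hfs => exact absurd hfs.2.2.symm hw.ne_nil
  | [f], hfs => simpa using hfs.2.2
  | _ :: _ :: _, hfs => exact (hw.not_isNyldonFactorization hfs (by simp)).elim

theorem IsNyldonFactorization.append {fs gs : List (List A)} {f g u v : List A}
    (h₁ : IsNyldonFactorization (fs ++ [f]) u) (h₂ : IsNyldonFactorization (g :: gs) v)
    (hfg : f ≤ g) : IsNyldonFactorization (fs ++ [f] ++ g :: gs) (u ++ v) := by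
  refine ⟨fun x hx => ?_, h₁.2.1.append h₂.2.1 ?_, by simp [← h₁.2.2, ← h₂.2.2]⟩
  · rcases List.mem_append.mp hx with hx | hx
    exacts [h₁.1 x hx, h₂.1 x hx]
  · simpa using lexLe_iff_le.mpr hfg

theorem IsNyldonFactorization.of_append_singleton {fs : List (List A)} {f u : List A}
    (h : IsNyldonFactorization (fs ++ [f]) (u ++ f)) : IsNyldonFactorization fs u :=
  ⟨fun x hx => h.1 x (List.mem_append_left _ hx), h.2.1.left_of_append,
    List.append_cancel_right (bs := f) (by simpa using h.2.2)⟩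

def NyldonSuffixesLt (w : List A) : Prop :=
  ∀ s, IsNyldon s → s <:+ w → s ≠ w → s < w

theorem NyldonSuffixesLt.le {w s : List A} (hw : NyldonSuffixesLt w) (hs : IsNyldon s)
    (hsw : s <:+ w) : s ≤ w := by
  by_cases h : s = w
  · exact h.le
  · exact (hw s hs hsw h).le

theorem IsNyldon.lt_last_of_append {ps : List (List A)} {p pk s : List A}
    (hw : IsNyldon (p ++ s)) (hs : IsNyldon s) (hp : IsNyldonFactorization (ps ++ [pk]) p) :
    s < pk := by
  by_contra! h
  exact hw.not_isNyldonFactorization (hp.append hs.isNyldonFactorization_singleton h) (by simp)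

theorem IsNyldonFactorization.suffix_last_of_isNyldon {fs : List (List A)} {v w s : List A}
    (hfs : IsNyldonFactorization (fs ++ [v]) w) (hdom : ∀ f ∈ fs, NyldonSuffixesLt f)
    (hs : IsNyldon s) (hsw : s <:+ w) : s <:+ v := by
  induction fs generalizing w with
  | nil => simpa [← hfs.2.2] using hsw
  | cons f fs ih =>
    obtain ⟨g, gs, hg⟩ : ∃ g gs, fs ++ [v] = g :: gs := List.exists_cons_of_ne_nil (by simp)
    have hfs' : IsNyldonFactorization (f :: (fs ++ [v])) w := hfs
    have htail : IsNyldonFactorization (fs ++ [v]) (fs ++ [v]).flatten :=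
      ⟨fun x hx => hfs'.1 x (List.mem_cons_of_mem f hx), hfs'.2.1.tail, rfl⟩
    have hw : w = f ++ (fs ++ [v]).flatten := by simp [← hfs'.2.2]
    subst hw
    by_cases hlen : s.length ≤ (fs ++ [v]).flatten.length
    · exact ih htail (fun f' hf' => hdom f' (List.mem_cons_of_mem f hf'))
        (List.suffix_of_suffix_length_le hsw (List.suffix_append _ _) hlen)
    exfalso
    obtain ⟨r, rfl⟩ := List.suffix_of_suffix_length_le (List.suffix_append _ _) hsw (by omega)
    have hrf : r <:+ f := List.suffix_append_self_iff.mp hsw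
    obtain ⟨rs, rm, hr⟩ := exists_isNyldonFactorization (w := r) (by rintro rfl; simp at hlen)
    have hrm : rm ≤ f := (hdom f List.mem_cons_self).le (hr.1 rm (by simp))
      ((List.suffix_append rs.flatten rm).trans (by simpa [← hr.2.2] using hrf))
    have hfg : f ≤ g := by
      rw [hg] at hfs'
      exact lexLe_iff_le.mp (List.isChain_cons_cons.mp hfs'.2.1).1
    have htail' : IsNyldonFactorization (g :: gs) (fs ++ [v]).flatten := by rwa [← hg]
    exact hs.not_isNyldonFactorization (hr.append htail' (hrm.trans hfg)) (by simp; omega)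

theorem IsNyldon.lt_of_append_of_forall {p s w : List A} (hw : IsNyldon w) (hs : IsNyldon s)
    (hpw : p ++ s = w) (hp : p ≠ [])
    (hdom : ∀ f : List A, f.length < w.length → IsNyldon f → NyldonSuffixesLt f)
    (hlonger : ∀ v : List A, s.length < v.length → IsNyldon v → v <:+ w → v ≠ w → v < w) :
    s < w := by
  subst hpw
  obtain ⟨ps, pk, hpk⟩ := exists_isNyldonFactorization hp
  have hspk : s < pk := hw.lt_last_of_append hs hpk
  have hu : pk ++ s <:+ p ++ s := by simp [← hpk.2.2]
  by_cases hu_eq : pk ++ s = p ++ s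
  · exact hu_eq ▸ List.Lex.append_right _ s hspk
  have hu_len : (pk ++ s).length < (p ++ s).length :=
    lt_of_le_of_ne hu.length_le fun h => hu_eq (hu.eq_of_length h)
  obtain ⟨gs, v, hgs⟩ := exists_isNyldonFactorization (w := pk ++ s) (by simp [hs.ne_nil])
  have hv : IsNyldon v := hgs.1 v (by simp)
  have hvu : v <:+ pk ++ s := by simp [← hgs.2.2]
  have hsv : s <:+ v := hgs.suffix_last_of_isNyldon
    (fun f hf => hdom f
      ((List.infix_of_mem_flatten (by simp [hf] : f ∈ gs ++ [v])).length_le.trans_lt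
        (hgs.2.2 ▸ hu_len)) (hgs.1 f (by simp [hf])))
    hs (List.suffix_append pk s)
  have hsv_ne : s ≠ v := by
    rintro rfl
    obtain rfl := hgs.of_append_singleton.eq_singleton (hpk.1 pk (by simp))
    exact (lexLe_iff_le.mp (List.isChain_pair.mp hgs.2.1)).not_gt hspk
  have hv_len : v.length < (p ++ s).length := hvu.length_le.trans_lt hu_len
  calc s < v := hdom v hv_len hv s hs hsv hsv_ne
    _ < p ++ s := hlonger v (lt_of_le_of_ne hsv.length_le fun h => hsv_ne (hsv.eq_of_length h))
        hv (hvu.trans hu) fun h => hv_len.ne (congrArg List.length h)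

theorem IsNyldon.lt_of_suffix {w s : List A} (hw : IsNyldon w) (hs : IsNyldon s)
    (hsw : s <:+ w) (hne : s ≠ w) : s < w := by
  obtain ⟨p, hpw⟩ := hsw
  refine hw.lt_of_append_of_forall hs hpw (by rintro rfl; exact hne hpw) ?_ ?_
  · exact fun f hlt hf t ht htf htne => hf.lt_of_suffix ht htf htne
  · exact fun v hlt hv hvw hvne => hw.lt_of_suffix hv hvw hvne
termination_by (w.length, w.length - s.length)
decreasing_by
  · exact Prod.Lex.left _ _ hlt
  · exact Prod.Lex.right _ (by have := hvw.length_le; omega)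

end Nyldon

theorem stmt_0_general {A : Type*} [LinearOrder A]
    (x s : List A) (hx : IsNyldon x) (hs : IsNyldon s)
    (hsuffix : s <:+ x) (hproper : s ≠ x) :
    LexLt s x :=
  hx.lt_of_suffix hs hsuffix hproper

/-- For every Nyldon word `x` and every proper nonempty suffix `s` of `x`
such that `s` is Nyldon, one has `s <_lex x`. -/
theorem stmt_0 {A : Type*} [LinearOrder A] [Fintype A] (hA : 2 ≤ Fintype.card A)
    (x s : List A) (hx : IsNyldon x) (hs : IsNyldon s)
    (hsuffix : s <:+ x) (hproper : s ≠ x) :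
    LexLt s x :=
  stmt_0_general x s hx hs hsuffix hproper
end

section
/- Let (G, ≺) be a Nyldon-like set over A, let m ≥ 2, and let u_1, u_2, …, u_m ∈ G be such that: (1) the word w = u_1 u_2 ⋯ u_m is in G; and (2) for all 1 ≤ i ≤ j ≤ m, every G-factorization of the word u_i u_{i+1} ⋯ u_j preserves the blocks u_i, u_{i+1}, …, u_j. Then w ≻ u_1. -/
/-!
Under the block hypothesis every `G`-factorization of a run `u_i ⋯ u_j` is a factorization into
runs of blocks, so on runs `G` behaves like a Nyldon-like set whose letters are the blocks.
A run `w ∈ G` of at least two blocks splits as `w = p v` with `v` its longest proper suffix run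
in `G`; then `p ∈ G` and `v ≺ p ≺ w`, and induction on the number of blocks gives
`u_1 ⪯ p ≺ w`. That `p ∈ G` rests on two facts proved together by strong induction: the last
factor of any block factorization of a run is at least as long as every suffix run in `G`, and a
proper suffix run in `G` of a run in `G` is smaller than it.
-/

open List

theorem List.suffix_or_exists_of_suffix_append {α : Type*} {v a b : List α} (h : v <:+ a ++ b) :
    v <:+ b ∨ ∃ x, x ≠ [] ∧ x <:+ a ∧ v = x ++ b := by
  obtain ⟨t, ht⟩ := h
  rcases append_eq_append_iff.mp ht with ⟨x, rfl, rfl⟩ | ⟨y, rfl, rfl⟩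
  · by_cases hx : x = []
    · subst hx
      exact Or.inl (suffix_refl b)
    · exact Or.inr ⟨x, hx, suffix_append t x, rfl⟩
  · exact Or.inl (suffix_append y v)

namespace NyldonLike

variable {A : Type*} {G : NyldonLike A}

theorem ne_nil_of_mem_flatten {us : List (List A)} (h : G.Mem us.flatten) : us ≠ [] := by
  rintro rfl
  exact G.mem_ne_nil _ h rfl

theorem lt_of_not_le {u v : List A} (hu : G.Mem u) (hv : G.Mem v) (h : ¬ G.le u v) :
    G.lt v u := by
  rcases G.lt_total u v hu hv with huv | rfl | hvu
  · exact absurd (Or.inr huv) h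
  · exact absurd (Or.inl rfl) h
  · exact hvu

theorem lt_of_lt_of_le {u v w : List A} (hu : G.Mem u) (hv : G.Mem v) (hw : G.Mem w)
    (huv : G.lt u v) (hvw : G.le v w) : G.lt u w := by
  rcases hvw with rfl | hvw
  · exact huv
  · exact G.lt_trans u v w hu hv hw huv hvw

theorem lt_of_le_of_lt {u v w : List A} (hu : G.Mem u) (hv : G.Mem v) (hw : G.Mem w)
    (huv : G.le u v) (hvw : G.lt v w) : G.lt u w := by
  rcases huv with rfl | huv
  · exact hvw
  · exact G.lt_trans u v w hu hv hw huv hvw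

theorem not_mem_of_isFactorization {fs : List (List A)} {w : List A}
    (hf : G.IsFactorization fs w) (h2 : 2 ≤ fs.length) : ¬ G.Mem w := by
  obtain ⟨hmem, hchain, rfl⟩ := hf
  have hlen : 2 ≤ fs.flatten.length :=
    h2.trans (length_le_length_flatten_of_ne_nil fun f hf => G.mem_ne_nil f (hmem f hf))
  exact fun hw => (G.mem_iff _ hlen).mp hw ⟨fs, h2, hmem, hchain, rfl⟩

theorem exists_isFactorization {w : List A} (hw : w ≠ []) : ∃ fs, G.IsFactorization fs w := by
  by_cases hmem : G.Mem w
  · exact ⟨[w], by simpa using hmem, isChain_singleton _, by simp⟩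
  have hlen : 2 ≤ w.length := by
    by_contra hlt
    have := length_pos_iff.mpr hw
    obtain ⟨a, rfl⟩ := length_eq_one_iff.mp (show w.length = 1 by omega)
    exact hmem (G.singleton_mem a)
  obtain ⟨fs, -, hfs⟩ := not_not.mp (mt (G.mem_iff w hlen).mpr hmem)
  exact ⟨fs, hfs⟩

structure IsBlockFactorization (G : NyldonLike A) (P : List (List (List A)))
    (us : List (List A)) : Prop where
  ne_nil : ∀ p ∈ P, p ≠ []
  flatten_eq : P.flatten = us
  mem : ∀ p ∈ P, G.Mem p.flatten
  chain : (P.map List.flatten).IsChain G.le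

namespace IsBlockFactorization

variable {P Q : List (List (List A))} {us vs : List (List A)}

theorem isFactorization (hP : G.IsBlockFactorization P us) :
    G.IsFactorization (P.map List.flatten) us.flatten :=
  ⟨by simpa using hP.mem, hP.chain, by rw [← flatten_flatten, hP.flatten_eq]⟩

theorem not_mem (hP : G.IsBlockFactorization P us) (h2 : 2 ≤ P.length) : ¬ G.Mem us.flatten :=
  not_mem_of_isFactorization hP.isFactorization (by simpa using h2)

theorem eq_singleton (hP : G.IsBlockFactorization P us) (hne : us ≠ [])
    (hus : G.Mem us.flatten) : P = [us] := by
  match P, hP with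
  | [], hP => exact absurd hP.flatten_eq.symm hne
  | [_], hP => simpa using hP.flatten_eq
  | _ :: _ :: _, hP => exact absurd hus (hP.not_mem (by simp))

theorem singleton (hne : us ≠ []) (hus : G.Mem us.flatten) : G.IsBlockFactorization [us] us :=
  ⟨by simpa using hne, by simp, by simpa using hus, isChain_singleton _⟩

theorem append (hP : G.IsBlockFactorization P us) (hQ : G.IsBlockFactorization Q vs)
    (hle : ∀ f ∈ P.getLast?, ∀ g ∈ Q.head?, G.le f.flatten g.flatten) :
    G.IsBlockFactorization (P ++ Q) (us ++ vs) where
  ne_nil p hp := (mem_append.mp hp).elim (hP.ne_nil p) (hQ.ne_nil p)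
  flatten_eq := by rw [flatten_append, hP.flatten_eq, hQ.flatten_eq]
  mem p hp := (mem_append.mp hp).elim (hP.mem p) (hQ.mem p)
  chain := by
    rw [map_append]
    refine hP.chain.append hQ.chain ?_
    simpa [getLast?_map, head?_map] using hle

theorem left_of_append (h : G.IsBlockFactorization (P ++ Q) us) :
    G.IsBlockFactorization P P.flatten :=
  ⟨fun p hp => h.ne_nil p (mem_append_left Q hp), rfl,
    fun p hp => h.mem p (mem_append_left Q hp), by
      have := h.chain
      rw [map_append] at this
      exact this.left_of_append⟩

theorem right_of_append (h : G.IsBlockFactorization (P ++ Q) us) :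
    G.IsBlockFactorization Q Q.flatten :=
  ⟨fun p hp => h.ne_nil p (mem_append_right P hp), rfl,
    fun p hp => h.mem p (mem_append_right P hp), by
      have := h.chain
      rw [map_append] at this
      exact this.right_of_append⟩

theorem le_of_append (h : G.IsBlockFactorization (P ++ Q) us) {f g : List (List A)}
    (hf : f ∈ P.getLast?) (hg : g ∈ Q.head?) : G.le f.flatten g.flatten := by
  have := h.chain
  rw [map_append] at this
  exact (isChain_append.mp this).2.2 _ (by simpa [getLast?_map] using ⟨f, hf, rfl⟩) _
    (by simpa [head?_map] using ⟨g, hg, rfl⟩)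

/-- The factors before `v` concatenate to `f ∈ G`, so there is only one of them. -/
theorem le_of_append_singleton {f v : List (List A)} {H : List (List (List A))}
    (hH : G.IsBlockFactorization (H ++ [v]) (f ++ v)) (hfne : f ≠ []) (hf : G.Mem f.flatten) :
    G.le f.flatten v.flatten := by
  have hflat : H.flatten = f := by simpa using hH.flatten_eq
  obtain rfl : H = [f] := (hflat ▸ hH.left_of_append).eq_singleton hfne hf
  exact hH.le_of_append (by simp) (by simp)

end IsBlockFactorization

/-- Hypothesis (2) of the theorem, for the runs of blocks of `us`, together with `us ⊆ G`. -/
structure RigidBlocks (G : NyldonLike A) (us : List (List A)) : Prop where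
  mem : ∀ u ∈ us, G.Mem u
  preservesBlocks : ∀ vs, vs <:+: us → vs ≠ [] →
    ∀ fs, G.IsFactorization fs vs.flatten → PreservesBlocks vs fs

def LastFactorMaximal (G : NyldonLike A) (us : List (List A)) : Prop :=
  ∀ P g, G.IsBlockFactorization (P ++ [g]) us →
    ∀ v, v <:+ us → G.Mem v.flatten → v.length ≤ g.length

def SuffixesLt (G : NyldonLike A) (us : List (List A)) : Prop :=
  G.Mem us.flatten →
    ∀ v, v <:+ us → v ≠ us → G.Mem v.flatten → G.lt v.flatten us.flatten

theorem exists_longest_proper_suffix {us : List (List A)} (hmem : ∀ u ∈ us, G.Mem u)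
    (h2 : 2 ≤ us.length) :
    ∃ p v, p ++ v = us ∧ p ≠ [] ∧ G.Mem v.flatten ∧
      ∀ w, w <:+ us → w ≠ us → G.Mem w.flatten → w <:+ v := by
  classical
  have hex : ∃ k, 0 < k ∧ k < us.length ∧ G.Mem (us.drop k).flatten := by
    refine ⟨us.length - 1, by omega, by omega, ?_⟩
    rw [drop_length_sub_one (ne_nil_of_length_pos (by omega))]
    simpa using hmem _ (getLast_mem _)
  set k := Nat.find hex
  obtain ⟨hk0, hklt, hkmem⟩ : 0 < k ∧ k < us.length ∧ G.Mem (us.drop k).flatten :=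
    Nat.find_spec hex
  refine ⟨us.take k, us.drop k, take_append_drop _ _,
    ne_nil_of_length_pos (by rw [length_take]; omega), hkmem, fun w hw hwus hwmem => ?_⟩
  have hwlt : w.length < us.length := lt_of_le_of_ne hw.length_le (mt hw.eq_of_length hwus)
  have hwpos : 0 < w.length := length_pos_iff.mpr (ne_nil_of_mem_flatten hwmem)
  have hk : k ≤ us.length - w.length :=
    Nat.find_min' hex ⟨by omega, by omega, by rwa [← suffix_iff_eq_drop.mp hw]⟩
  exact suffix_of_suffix_length_le hw (drop_suffix _ _) (by simp; omega)

namespace RigidBlocks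

variable {us : List (List A)}

theorem mono (h : G.RigidBlocks us) {vs : List (List A)} (hvs : vs <:+: us) :
    G.RigidBlocks vs :=
  ⟨fun u hu => h.mem u (hvs.subset hu), fun ws hws => h.preservesBlocks ws (hws.trans hvs)⟩

theorem of_drop_take (hmem : ∀ u ∈ us, G.Mem u)
    (hpres : ∀ i j : ℕ, i ≤ j → j < us.length →
      ∀ fs : List (List A),
        G.IsFactorization fs ((us.drop i).take (j + 1 - i)).flatten →
        PreservesBlocks ((us.drop i).take (j + 1 - i)) fs) :
    G.RigidBlocks us := by
  refine ⟨hmem, fun vs ⟨s, t, hst⟩ hvs => ?_⟩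
  have hpos := length_pos_iff.mpr hvs
  have hrun : (us.drop s.length).take (s.length + vs.length - 1 + 1 - s.length) = vs := by
    rw [show s.length + vs.length - 1 + 1 - s.length = vs.length by omega, ← hst,
      append_assoc, drop_left, take_left]
  have hlen : s.length + vs.length - 1 < us.length := by
    rw [← hst]
    simp only [length_append]
    omega
  simpa only [hrun] using hpres s.length _ (by omega) hlen

theorem exists_isBlockFactorization (h : G.RigidBlocks us) (hne : us ≠ []) :
    ∃ P g, G.IsBlockFactorization (P ++ [g]) us := by
  obtain ⟨u, hu⟩ := exists_mem_of_ne_nil us hne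
  obtain ⟨fs, hfs⟩ := exists_isFactorization (G := G)
    (flatten_ne_nil_iff.mpr ⟨u, hu, G.mem_ne_nil u (h.mem u hu)⟩)
  obtain ⟨P, hPne, hP, rfl⟩ := h.preservesBlocks us (infix_refl us) hne fs hfs
  obtain ⟨P, g, rfl⟩ : ∃ P' g, P = P' ++ [g] := by
    rcases eq_nil_or_concat' P with rfl | hP'
    · exact absurd hP.symm hne
    · exact hP'
  exact ⟨P, g, hPne, hP, fun p hp => hfs.1 _ (mem_map_of_mem hp), hfs.2.1⟩

theorem mem_prefix_of_longest_suffix {p v : List (List A)} (h : G.RigidBlocks (p ++ v))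
    (hus : G.Mem (p ++ v).flatten) (hp : p ≠ []) (hv : G.Mem v.flatten)
    (hmax : ∀ w, w <:+ p ++ v → w ≠ p ++ v → G.Mem w.flatten → w <:+ v)
    (hL : ∀ z, z <:+ p ++ v → z ≠ p ++ v → G.LastFactorMaximal z) : G.Mem p.flatten := by
  -- If `p = P f` with `P ≠ []`, then `f v ∉ G` by maximality of `v`, and its last factor is `v`
  -- by `hL`; so `f ⪯ v` and `P f v` factorizes `p v ∈ G`.
  by_contra hpG
  obtain ⟨P, f, hP⟩ := (h.mono (prefix_append p v).isInfix).exists_isBlockFactorization hp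
  have hf : G.Mem f.flatten := hP.mem f (by simp)
  have hfne : f ≠ [] := hP.ne_nil f (by simp)
  have hPne : P ≠ [] := by
    rintro rfl
    obtain rfl : f = p := by simpa using hP.flatten_eq
    exact hpG hf
  have hPflat : P.flatten ≠ [] :=
    flatten_ne_nil_iff.mpr ⟨_, getLast_mem hPne, hP.ne_nil _ (by simp [getLast_mem hPne])⟩
  obtain rfl : p = P.flatten ++ f := by simpa using hP.flatten_eq.symm
  have hz : f ++ v <:+ P.flatten ++ f ++ v := by rw [append_assoc]; exact suffix_append _ _
  have hzne : f ++ v ≠ P.flatten ++ f ++ v := by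
    rw [append_assoc]
    exact fun heq => hPflat (self_eq_append_left.mp heq)
  have hzG : ¬ G.Mem (f ++ v).flatten := fun hzG =>
    hfne (append_left_eq_self.mp ((hmax _ hz hzne hzG).eq_of_length_le (by simp)))
  obtain ⟨H, g, hH⟩ := (h.mono hz.isInfix).exists_isBlockFactorization (by simp [hfne])
  have hgz : g <:+ f ++ v := ⟨H.flatten, by simpa using hH.flatten_eq⟩
  have hgv : g <:+ v := hmax g (hgz.trans hz)
    (fun hg => hzne (hz.eq_of_length_le (hg ▸ hgz.length_le))) (hH.mem g (by simp))
  obtain rfl : g = v := hgv.eq_of_length_le (hL _ hz hzne H g hH v (suffix_append f v) hv)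
  refine (hP.append (.singleton (ne_nil_of_mem_flatten hv) hv) ?_).not_mem (by simp) hus
  simpa using hH.le_of_append_singleton hfne hf

theorem exists_standard_factorization (h : G.RigidBlocks us) (hus : G.Mem us.flatten)
    (h2 : 2 ≤ us.length) (hL : ∀ z, z <:+ us → z ≠ us → G.LastFactorMaximal z) :
    ∃ p v, p ++ v = us ∧ p ≠ [] ∧ G.Mem p.flatten ∧ G.Mem v.flatten ∧
      G.lt v.flatten p.flatten ∧ G.lt p.flatten us.flatten ∧
      ∀ w, w <:+ us → w ≠ us → G.Mem w.flatten → w <:+ v := by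
  obtain ⟨p, v, rfl, hp, hv, hmax⟩ := exists_longest_proper_suffix h.mem h2
  have hpG := h.mem_prefix_of_longest_suffix hus hp hv hmax hL
  have hvp : G.lt v.flatten p.flatten := lt_of_not_le hpG hv fun hle =>
    not_mem_of_isFactorization (fs := [p.flatten, v.flatten])
      ⟨by simp [hpG, hv], isChain_pair.mpr hle, by simp⟩ (by simp) hus
  have hpus : G.lt p.flatten (p ++ v).flatten := by
    simpa using G.append_lt _ _ hpG hv (by simpa using hus)
  exact ⟨p, v, rfl, hp, hpG, hv, hvp, hpus, hmax⟩

theorem lastFactorMaximal (h : G.RigidBlocks us)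
    (ih : ∀ vs, vs <:+: us → vs ≠ us → G.LastFactorMaximal vs ∧ G.SuffixesLt vs) :
    G.LastFactorMaximal us := by
  intro P g hP v hv hvG
  rcases P with _ | ⟨g₁, P⟩
  · obtain rfl : g = us := by simpa using hP.flatten_eq
    exact hv.length_le
  set R := P ++ [g]
  have hP' : G.IsBlockFactorization ([g₁] ++ R) us := hP
  have hR := hP'.right_of_append
  have hg₁ne : g₁ ≠ [] := hP.ne_nil g₁ (by simp)
  have hRne : R.flatten ≠ [] := flatten_ne_nil_iff.mpr ⟨g, by simp [R], hP.ne_nil g (by simp)⟩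
  obtain rfl : us = g₁ ++ R.flatten := by simp [← hP.flatten_eq, R]
  rcases suffix_or_exists_of_suffix_append hv with hvR | ⟨x, hxne, hxg, rfl⟩
  · refine (ih R.flatten (suffix_append _ _).isInfix ?_).1 P g hR v hvR hvG
    exact fun heq => hg₁ne (self_eq_append_left.mp heq)
  exfalso
  -- Otherwise `v = x R` with `x` a proper suffix of `g₁`; the last factor `q` of `x` satisfies
  -- `q ≺ g₁ ⪯ g₂`, so a factorization of `x` followed by `R` would factorize `v ∈ G`.
  have hx : G.RigidBlocks x := h.mono (hxg.isInfix.trans (prefix_append _ _).isInfix)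
  obtain ⟨Q, q, hQ⟩ := hx.exists_isBlockFactorization hxne
  obtain ⟨g₂, hg₂⟩ : ∃ g₂, g₂ ∈ R.head? := ⟨_, head_mem_head? (by simp [R])⟩
  have hg₁g₂ : G.le g₁.flatten g₂.flatten := hP'.le_of_append (by simp) hg₂
  have hxg₁ : x ≠ g₁ := by
    rintro rfl
    exact hP.not_mem (by simp) hvG
  have hqx : q <:+ x := ⟨Q.flatten, by simpa using hQ.flatten_eq⟩
  have hqg₁ : G.lt q.flatten g₁.flatten :=
    (ih g₁ (prefix_append _ _).isInfix fun heq => hRne (self_eq_append_right.mp heq)).2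
      (hP.mem g₁ (by simp)) q (hqx.trans hxg)
      (fun hq => hxg₁ (hxg.eq_of_length_le (hq ▸ hqx.length_le))) (hQ.mem q (by simp))
  refine (hQ.append hR fun f hf y hy => ?_).not_mem (by simp [R]; omega) hvG
  obtain rfl : q = f := by simpa using hf
  obtain rfl : y = g₂ := Option.mem_unique hy hg₂
  exact Or.inr (lt_of_lt_of_le (hQ.mem _ (by simp)) (hP.mem g₁ (by simp))
    (hR.mem y (mem_of_mem_head? hg₂)) hqg₁ hg₁g₂)

theorem suffixesLt (h : G.RigidBlocks us)
    (ih : ∀ vs, vs <:+: us → vs ≠ us → G.LastFactorMaximal vs ∧ G.SuffixesLt vs) :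
    G.SuffixesLt us := by
  intro hus v hv hvus hvG
  have h2 : 2 ≤ us.length := by
    have := length_pos_iff.mpr (ne_nil_of_mem_flatten hvG)
    have := lt_of_le_of_ne hv.length_le (mt hv.eq_of_length hvus)
    omega
  obtain ⟨p, v₀, rfl, hp, hpG, hv₀, hv₀p, hpus, hmax⟩ :=
    h.exists_standard_factorization hus h2 fun z hz hzne => (ih z hz.isInfix hzne).1
  have hvv₀ : G.le v.flatten v₀.flatten := by
    by_cases hveq : v = v₀
    · exact Or.inl (congrArg List.flatten hveq)
    · have hv₀ne : v₀ ≠ p ++ v₀ := fun heq => hp (self_eq_append_left.mp heq)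
      exact Or.inr
        ((ih v₀ (suffix_append _ _).isInfix hv₀ne).2 hv₀ v (hmax v hv hvus hvG) hveq hvG)
  exact G.lt_trans _ _ _ hvG hpG hus (lt_of_le_of_lt hvG hv₀ hpG hvv₀ hv₀p) hpus

theorem lastFactorMaximal_and_suffixesLt (h : G.RigidBlocks us) :
    G.LastFactorMaximal us ∧ G.SuffixesLt us := by
  induction hn : us.length using Nat.strong_induction_on generalizing us with
  | _ n ih =>
    have ih' : ∀ vs, vs <:+: us → vs ≠ us → G.LastFactorMaximal vs ∧ G.SuffixesLt vs :=
      fun vs hvs hne =>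
        ih _ (hn ▸ lt_of_le_of_ne hvs.length_le (mt hvs.eq_of_length hne)) (h.mono hvs) rfl
    exact ⟨h.lastFactorMaximal ih', h.suffixesLt ih'⟩

theorem head_lt (h : G.RigidBlocks us) (hne : us ≠ []) (h2 : 2 ≤ us.length)
    (hus : G.Mem us.flatten) : G.lt (us.head hne) us.flatten := by
  induction hn : us.length using Nat.strong_induction_on generalizing us with
  | _ n ih =>
    obtain ⟨p, v, rfl, hp, hpG, hv, -, hpus, -⟩ := h.exists_standard_factorization hus h2
      fun z hz _ => (h.mono hz.isInfix).lastFactorMaximal_and_suffixesLt.1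
    rw [head_append_of_ne_nil hp]
    match p, hp with
    | [a], _ => simpa using hpus
    | a :: b :: p, hp =>
      have hlt : (a :: b :: p).length < n := by
        have := length_pos_iff.mpr (ne_nil_of_mem_flatten hv)
        simp only [← hn, length_append] at this ⊢
        omega
      exact G.lt_trans _ _ _ (h.mem a (by simp)) hpG hus
        (ih _ hlt (h.mono (prefix_append _ _).isInfix) hp (by simp) hpG rfl) hpus

end RigidBlocks

end NyldonLike

theorem stmt_5_general {A : Type*}
    (G : NyldonLike A) (us : List (List A)) (hne : us ≠ []) (hm : 2 ≤ us.length)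
    (hmem : ∀ u ∈ us, G.Mem u) (hw : G.Mem us.flatten)
    (hpres : ∀ i j : ℕ, i ≤ j → j < us.length →
      ∀ fs : List (List A),
        G.IsFactorization fs ((us.drop i).take (j + 1 - i)).flatten →
        PreservesBlocks ((us.drop i).take (j + 1 - i)) fs) :
    G.lt (us.head hne) us.flatten :=
  (NyldonLike.RigidBlocks.of_drop_take hmem hpres).head_lt hne hm hw

/-- Let `(G, ≺)` be a Nyldon-like set and `u_1, …, u_m ∈ G` (`m ≥ 2`) be such
that `w = u_1 ⋯ u_m ∈ G` and every `G`-factorization of every substring of blocks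
`u_i ⋯ u_j` preserves the blocks `u_i, …, u_j`. Then `w ≻ u_1`. -/
theorem stmt_5 {A : Type*} [LinearOrder A] [Fintype A] (hA : 2 ≤ Fintype.card A)
    (G : NyldonLike A) (us : List (List A)) (hne : us ≠ []) (hm : 2 ≤ us.length)
    (hmem : ∀ u ∈ us, G.Mem u) (hw : G.Mem us.flatten)
    (hpres : ∀ i j : ℕ, i ≤ j → j < us.length →
      ∀ fs : List (List A),
        G.IsFactorization fs ((us.drop i).take (j + 1 - i)).flatten →
        PreservesBlocks ((us.drop i).take (j + 1 - i)) fs) :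
    G.lt (us.head hne) us.flatten :=
  stmt_5_general G us hne hm hmem hw hpres
end

section
/- Let A = {0, 1, …, m} with m ≥ 1, let ℓ ≥ 3, and let v be any word over A with |v| ≤ ℓ − 3. Then the word m · (m−1) · m^{ℓ−2} · v (the letter m, the letter m−1, ℓ−2 copies of the letter m, followed by v) is Nyldon. -/
section

variable {A : Type*} [LinearOrder A]

theorem isNyldon_singleton (a : A) : IsNyldon [a] := by
  rw [IsNyldon]
  refine ⟨List.cons_ne_nil a [], fun fs h2 hne hfl _ _ => ?_⟩
  have := length_le_length_flatten_of_ne_nil hne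
  simp only [hfl, List.length_singleton] at this
  omega

theorem lexLe_singleton_cons {a b : A} (u : List A) (hab : a ≤ b) : LexLe [a] (b :: u) := by
  rcases hab.lt_or_eq with hab | rfl
  · exact Or.inr (List.Lex.rel hab)
  · cases u with
    | nil => exact Or.inl rfl
    | cons c u => exact Or.inr (List.Lex.cons List.Lex.nil)

theorem LexLe.head_le {a b : A} {s t : List A} (h : LexLe (a :: s) (b :: t)) : a ≤ b := by
  rcases h with h | h
  · exact (List.cons.inj h).1.le
  · cases h with
    | rel h => exact h.le
    | cons _ => exact le_rfl

theorem lexLe_cons_cons_iff {a : A} {s t : List A} : LexLe (a :: s) (a :: t) ↔ LexLe s t := by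
  simp only [LexLe, LexLt, List.cons.injEq, true_and, List.lex_cons_iff]

theorem not_lexLe_cons_nil {a : A} {s : List A} : ¬ LexLe (a :: s) [] := by
  rintro (h | h)
  · exact List.cons_ne_nil a s h
  · exact List.not_lex_nil h

/-- If `a ≤ b`, prefixing `[a]` to `b u`, or to a nondecreasing Nyldon factorization of `b u`,
gives a nondecreasing Nyldon factorization of `a b u`. -/
theorem IsNyldon.lt_of_cons_cons {a b : A} {u : List A} (h : IsNyldon (a :: b :: u)) :
    b < a := by
  by_contra! hab
  rw [IsNyldon] at h
  obtain ⟨-, hfact⟩ := h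
  by_cases hbu : IsNyldon (b :: u)
  · refine hfact [[a], b :: u] le_rfl (by simp) (by simp) ?_
      (List.isChain_pair.mpr (lexLe_singleton_cons u hab))
    simp only [List.mem_cons, List.not_mem_nil, or_false]
    rintro f (rfl | rfl)
    exacts [isNyldon_singleton a, hbu]
  · rw [IsNyldon] at hbu
    push Not at hbu
    obtain ⟨fs, h2, hne, hfl, hNy, hch, -⟩ := hbu (List.cons_ne_nil b u)
    obtain _ | ⟨_ | ⟨c, f⟩, fs⟩ := fs
    · simp at h2
    · exact absurd rfl (hne [] List.mem_cons_self)
    obtain ⟨rfl, -⟩ : c = b ∧ _ := by simpa using hfl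
    refine hfact ([a] :: (c :: f) :: fs) (by simp) ?_ (by simpa using hfl) ?_
      (List.isChain_cons_cons.mpr ⟨lexLe_singleton_cons f hab, hch⟩)
    · simpa using hne
    · simpa [isNyldon_singleton] using hNy

theorem exists_eq_cons_cons_of_append_eq {a b : A} (hba : b < a) {w₁ w₂ t u : List A}
    (h₁ : w₁ ≠ []) (h₂ : w₂ ≠ []) (hle : LexLe w₁ w₂) (h : w₁ ++ (w₂ ++ t) = a :: b :: u) :
    ∃ s, w₁ = a :: b :: s := by
  obtain _ | ⟨c, _ | ⟨d, s⟩⟩ := w₁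
  · exact absurd rfl h₁
  · obtain _ | ⟨e, w₂⟩ := w₂
    · exact absurd rfl h₂
    obtain ⟨rfl, rfl, -⟩ : c = a ∧ e = b ∧ _ := by simpa using h
    exact absurd hle.head_le hba.not_ge
  · obtain ⟨rfl, rfl, -⟩ : c = a ∧ d = b ∧ _ := by simpa using h
    exact ⟨s, rfl⟩

end

theorem List.replicate_prefix_of_replicate_succ_append_eq {α : Type*} {a b : α} (hab : a ≠ b)
    {n : ℕ} {x y z : List α} (h : replicate (n + 1) b ++ z = x ++ b :: a :: y) :
    replicate n b <+: x := by
  induction n generalizing x with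
  | zero => exact nil_prefix
  | succ n ih =>
    obtain _ | ⟨c, x⟩ := x
    · simp only [replicate_succ, cons_append, nil_append, cons.injEq] at h
      exact absurd h.2.1 hab.symm
    rw [replicate_succ, cons_append, cons_append, cons.injEq] at h
    obtain ⟨rfl, h⟩ := h
    exact cons_prefix_cons.mpr ⟨rfl, ih h⟩

section

variable {A : Type*} [LinearOrder A] [OrderTop A]

theorem not_lexLt_of_replicate_top_prefix {n : ℕ} {s t : List A}
    (hs : List.replicate n ⊤ <+: s) (ht : t.length ≤ n) : ¬ LexLt s t := by
  obtain ⟨r, rfl⟩ := hs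
  induction t generalizing n with
  | nil => exact List.not_lex_nil
  | cons c t ih =>
    obtain _ | n := n
    · simp at ht
    intro h
    cases h with
    | rel h => exact (le_top.trans_lt h).false
    | cons h => exact ih (by simpa using ht) h

/-- The second letter of `w` is `< ⊤` because `w` is Nyldon and `≥ a` by the comparison, so it
is `a`. -/
theorem exists_eq_top_cons_cons_of_lexLe {a : A} (ha : a ⋖ ⊤) {s w : List A} (hw : IsNyldon w)
    (h : LexLe (⊤ :: a :: s) w) : ∃ t, w = ⊤ :: a :: t ∧ LexLe s t := by
  obtain _ | ⟨c, w⟩ := w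
  · exact absurd h not_lexLe_cons_nil
  obtain rfl : c = ⊤ := top_le_iff.mp h.head_le
  obtain _ | ⟨d, t⟩ := w
  · exact absurd (lexLe_cons_cons_iff.mp h) not_lexLe_cons_nil
  have had : a ≤ d := (lexLe_cons_cons_iff.mp h).head_le
  obtain rfl : d = a := le_antisymm (ha.le_of_lt hw.lt_of_cons_cons) had
  exact ⟨t, rfl, lexLe_cons_cons_iff.mp (lexLe_cons_cons_iff.mp h)⟩

/-- In a nondecreasing factorization `w₁ w₂ ⋯` of `⊤ a ⊤ⁿ v`, both `w₁ = ⊤ a s₁` and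
`w₂ = ⊤ a s₂`; the second `a` lies beyond the block `⊤ⁿ`, so `s₁` starts with `⊤ⁿ⁻¹` while
`s₂` is shorter than `n - 1`, contradicting `s₁ ≤_lex s₂`. -/
theorem isNyldon_top_cons_cons_replicate_top_append {a : A} (ha : a ⋖ ⊤) {n : ℕ} {v : List A}
    (hv : v.length ≤ n - 1) : IsNyldon (⊤ :: a :: (List.replicate n ⊤ ++ v)) := by
  rw [IsNyldon]
  refine ⟨List.cons_ne_nil _ _, fun fs h2 hne hfl hNy hch => ?_⟩
  obtain _ | ⟨w₁, _ | ⟨w₂, rest⟩⟩ := fs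
  · simp at h2
  · simp at h2
  have h12 : LexLe w₁ w₂ := (List.isChain_cons_cons.mp hch).1
  obtain ⟨s₁, rfl⟩ := exists_eq_cons_cons_of_append_eq ha.lt (hne _ (by simp))
    (hne _ (by simp)) h12 (by simpa using hfl)
  obtain ⟨s₂, rfl, hs⟩ := exists_eq_top_cons_cons_of_lexLe ha (hNy _ (by simp)) h12
  have heq : s₁ ++ ⊤ :: a :: (s₂ ++ rest.flatten) = List.replicate n ⊤ ++ v := by
    simpa using hfl
  have hlen := congrArg List.length heq
  simp only [List.length_append, List.length_cons, List.length_replicate] at hlen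
  obtain ⟨k, rfl⟩ : ∃ k, n = k + 1 := ⟨n - 1, by omega⟩
  have hpre : List.replicate k ⊤ <+: s₁ :=
    List.replicate_prefix_of_replicate_succ_append_eq ha.ne heq.symm
  have hk := hpre.length_le
  rw [List.length_replicate] at hk
  rcases hs with rfl | hs
  · omega
  · exact not_lexLt_of_replicate_top_prefix hpre (by omega) hs

end

/-- Over `A = {0, 1, …, m}` with `m ≥ 1`, for `ℓ ≥ 3` and any word `v` with
`|v| ≤ ℓ - 3`, the word `m (m-1) m^{ℓ-2} v` is Nyldon. -/
theorem stmt_17 (m ℓ : ℕ) (hm : 1 ≤ m)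
    (v : List (Fin (m + 1))) (hv : v.length ≤ ℓ - 3) :
    IsNyldon (Fin.last m :: (⟨m - 1, by omega⟩ : Fin (m + 1)) ::
      (List.replicate (ℓ - 2) (Fin.last m) ++ v)) := by
  have hcov : (⟨m - 1, by omega⟩ : Fin (m + 1)) ⋖ ⊤ := by
    rw [Fin.covBy_iff, Fin.top_eq_last, Fin.val_last, Fin.val_mk, Nat.covBy_iff_add_one_eq]
    omega
  rw [← Fin.top_eq_last]
  exact isNyldon_top_cons_cons_replicate_top_append hcov (n := ℓ - 2) (by omega)
end

section
/- Let w be a nonempty word over A such that w <_lex s for every proper nonempty suffix s of w that is Lyndon. Then w is Lyndon. -/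
/-!
A nonincreasing factorization `w = f₁ ⋯ f_k` into `k ≥ 2` Lyndon words would give
`w <_lex f_k ≤_lex f₁ <_lex w`: the first inequality is the hypothesis applied to the proper
Lyndon suffix `f_k`, the second is monotonicity of the factorization, and the third holds
because `f₁` is a proper prefix of `w`.
-/

section LexOrder

variable {A : Type*} [LinearOrder A]

theorem lexLt_iff_lt {u v : List A} : LexLt u v ↔ u < v := Iff.rfl

theorem lt_append_of_ne_nil (u : List A) {v : List A} (hv : v ≠ []) : u < u ++ v := by
  obtain ⟨a, v, rfl⟩ := List.exists_cons_of_ne_nil hv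
  simpa using List.append_left_lt (l₁ := u) (List.nil_lt_cons a v)

end LexOrder

theorem le_of_isChain_ge_cons_concat {α : Type*} [Preorder α] {a b : α} {l : List α}
    (h : (a :: (l ++ [b])).IsChain (· ≥ ·)) : b ≤ a :=
  (List.pairwise_cons.mp (List.isChain_iff_pairwise.mp h)).1 b (by simp)

theorem stmt_19_general {A : Type*} [LinearOrder A]
    (w : List A) (hw : w ≠ [])
    (h : ∀ s : List A, s <:+ w → s ≠ w → s ≠ [] → IsLyndon s → LexLt w s) :
    IsLyndon w := by
  rw [IsLyndon]
  refine ⟨hw, fun fs h2 hne hjoin hLyndon hchain => ?_⟩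
  obtain _ | ⟨f, rest⟩ := fs
  · simp at h2
  obtain rfl | ⟨mid, g, rfl⟩ := rest.eq_nil_or_concat'
  · simp at h2
  have hf : f ≠ [] := hne f (by simp)
  have hg : g ≠ [] := hne g (by simp)
  have hw_eq : w = f ++ mid.flatten ++ g := by simp [← hjoin]
  have hfw : f < w := by
    simpa [hw_eq] using lt_append_of_ne_nil f (v := mid.flatten ++ g) (by simp [hg])
  have hgw : g ≠ w := by
    rintro rfl
    exact hf (List.append_eq_nil_iff.mp (List.append_left_eq_self.mp hw_eq.symm)).1
  have hwg : w < g := h g ⟨_, hw_eq.symm⟩ hgw hg (hLyndon g (by simp))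
  have hgf : g ≤ f := le_of_isChain_ge_cons_concat (hchain.imp fun _ _ => lexLe_iff_le.mp)
  exact lt_irrefl w (hwg.trans (hgf.trans_lt hfw))

/-- If a nonempty word `w` is lexicographically smaller than all of its
proper nonempty Lyndon suffixes, then `w` is Lyndon. -/
theorem stmt_19 {A : Type*} [LinearOrder A] [Fintype A] (hA : 2 ≤ Fintype.card A)
    (w : List A) (hw : w ≠ [])
    (h : ∀ s : List A, s <:+ w → s ≠ w → s ≠ [] → IsLyndon s → LexLt w s) :
    IsLyndon w :=
  stmt_19_general w hw h
end
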